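/- Fix positive integers N1, N2 and positive reals γ̄1, γ̄2, ζ̄1, ζ̄2 with γ̄1 ≠ ζ̄1 and γ̄2 ≠ ζ̄2. For i = 1, 2, let {E_{i,n} : 1 ≤ n ≤ Ni}, {E'_{i,n} : 1 ≤ n ≤ Ni}, and {Z_{i,n} : 1 ≤ n ≤ Ni} be families of random variables, all of them mutually independent, where each E_{i,n} and E'_{i,n} is exponentially distributed with mean γ̄i and each Z_{i,n} is exponentially distributed with mean ζ̄i. Define γi = max_{1 ≤ n ≤ Ni} E_{i,n} and κi = max_{1 ≤ n ≤ Ni} (E'_{i,n} + Z_{i,n}). Fix R1, R2 ≥ 0, set Rsum = R1 + R2, R̃i = 2^{Ri} − 1, R̃sum = 2^{Rsum} − 1. Then P( {log2(1+γ1) ≤ R1} ∪ {log2(1+γ2) ≤ R2} ∪ {min(log2(1+κ1), log2(1+κ2)) ≤ Rsum} ) = 1 − ∏_{i=1,2} [1 − (1 − e^{−R̃i/γ̄i})^{Ni}] · ∏_{i=1,2} [1 − (1 − (γ̄i e^{−R̃sum/γ̄i} − ζ̄i e^{−R̃sum/ζ̄i})/(γ̄i − ζ̄i))^{Ni}]. 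-/

import Mathlib

open MeasureTheory ProbabilityTheory Real

/-- The law of an exponentially distributed random variable with mean `θ`: density
`t ↦ (1/θ)·exp(−t/θ)` w.r.t. Lebesgue measure on `[0, ∞)`, density `0` on `(−∞, 0)`. -/
noncomputable def expLaw (θ : ℝ) : Measure ℝ :=
  volume.withDensity fun t => ENNReal.ofReal (if 0 ≤ t then (1 / θ) * Real.exp (-t / θ) else 0)

/-- `X` is exponentially distributed with mean `θ` (under `μ`). -/
def IsExpMean {Ω : Type*} [MeasurableSpace Ω] (μ : Measure Ω) (X : Ω → ℝ) (θ : ℝ) : Prop :=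
  Measurable X ∧ μ.map X = expLaw θ

/-!
Outside a null set all channel gains are nonnegative, so `log₂ (1 + max) ≤ R` holds iff every
term of the maximum is at most `2 ^ R - 1`. The outage event is therefore `(S₁ ∪ P₁) ∪ (S₂ ∪ P₂)`,
where `Sᵢ` says that every direct gain `E_{i,n}` is below its threshold and `Pᵢ` that every sum
`E'_{i,n} + Z_{i,n}` is. These four events are functions of disjoint blocks of the independent
family, so the probability of the complement factors. Each `P(Sᵢ)` is a power of the exponential
CDF; each `P(Pᵢ)` is a power of the CDF of a sum of two independent exponentials with distinct
means (a hypoexponential law), which is computed as a convolution integral.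
-/

open Set Filter

namespace ProbabilityTheory

variable {Ω ι ι' β β' : Type*} [MeasurableSpace Ω] [MeasurableSpace β] [MeasurableSpace β']
  {μ : Measure Ω}

lemma iIndepFun.sumElim_left {f : ι → Ω → β} {g : ι' → Ω → β}
    (h : iIndepFun (Sum.elim f g) μ) : iIndepFun f μ :=
  (h.precomp Sum.inl_injective :)

lemma iIndepFun.sumElim_right {f : ι → Ω → β} {g : ι' → Ω → β}
    (h : iIndepFun (Sum.elim f g) μ) : iIndepFun g μ :=
  (h.precomp Sum.inr_injective :)

lemma iIndepFun.indepFun_sumElim {f : ι → Ω → β} {g : ι' → Ω → β}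
    (h : iIndepFun (Sum.elim f g) μ) (hf : ∀ i, Measurable (f i)) (hg : ∀ j, Measurable (g j)) :
    IndepFun (fun ω i ↦ f i ω) (fun ω j ↦ g j ω) μ := by
  have hm : ∀ k, Measurable (Sum.elim f g k) := Sum.forall.2 ⟨hf, hg⟩
  rw [IndepFun_iff_Indep]
  convert indep_iSup_of_disjoint (fun k ↦ (hm k).comap_le) h.iIndep
    Set.isCompl_range_inl_range_inr.disjoint using 1 <;>
  rw [iSup_range] <;>
  simp [MeasurableSpace.pi, MeasurableSpace.comap_iSup, MeasurableSpace.comap_comp,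
    Function.comp_def]

lemma iIndepFun.curry {X : ι → ι' → Ω → β} (hX : ∀ i j, Measurable (X i j))
    (h : iIndepFun (fun p : ι × ι' ↦ X p.1 p.2) μ) :
    iIndepFun (fun i ω j ↦ X i j ω) μ := by
  have := h.isProbabilityMeasure
  have : ∀ i j, IsProbabilityMeasure (μ.map (X i j)) :=
    fun i j ↦ Measure.isProbabilityMeasure_map (hX i j).aemeasurable
  have hrow : ∀ i, μ.map (fun ω j ↦ X i j ω) = Measure.infinitePi fun j ↦ μ.map (X i j) :=
    fun i ↦ (h.precomp (Prod.mk_right_injective i)).map_fun_eq_infinitePi_map fun j ↦ hX i j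
  have hjoint : μ.map (fun ω (p : ι × ι') ↦ X p.1 p.2 ω)
      = Measure.infinitePi fun p : ι × ι' ↦ μ.map (X p.1 p.2) :=
    h.map_fun_eq_infinitePi_map (X := fun p : ι × ι' ↦ X p.1 p.2) fun p ↦ hX p.1 p.2
  rw [iIndepFun_iff_map_fun_eq_infinitePi_map fun i ↦ measurable_pi_lambda _ (hX i)]
  calc μ.map (fun ω i j ↦ X i j ω)
      = (μ.map fun ω (p : ι × ι') ↦ X p.1 p.2 ω).map (MeasurableEquiv.curry ι ι' β) := by
        rw [Measure.map_map (MeasurableEquiv.measurable _)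
          (measurable_pi_lambda (fun ω (p : ι × ι') ↦ X p.1 p.2 ω) fun p ↦ hX p.1 p.2)]
        rfl
    _ = Measure.infinitePi fun i ↦ Measure.infinitePi fun j ↦ μ.map (X i j) := by
        rw [hjoint]
        exact Measure.infinitePi_map_curry fun i j ↦ μ.map (X i j)
    _ = Measure.infinitePi fun i ↦ μ.map (fun ω j ↦ X i j ω) := by simp_rw [hrow]

lemma iIndepFun.prodMk_of_sumElim {f g : ι → Ω → β} (h : iIndepFun (Sum.elim f g) μ)
    (hf : ∀ i, Measurable (f i)) (hg : ∀ i, Measurable (g i)) :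
    iIndepFun (fun i ω ↦ (f i ω, g i ω)) μ := by
  let e : ι × Bool → ι ⊕ ι := fun p ↦ Equiv.boolProdEquivSum ι p.swap
  have hX : ∀ i b, Measurable (Sum.elim f g (e (i, b))) := by
    rintro i (_ | _)
    exacts [hf i, hg i]
  have hpairs : iIndepFun (fun p : ι × Bool ↦ Sum.elim f g (e p)) μ :=
    h.precomp ((Equiv.boolProdEquivSum ι).injective.comp Prod.swap_injective)
  exact (hpairs.curry hX).comp (fun _ v ↦ (v false, v true)) fun _ ↦ by fun_prop

lemma iIndepFun.measureReal_setOf_forall_mem [Fintype ι] {X : ι → Ω → β}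
    (h : iIndepFun X μ) (hX : ∀ i, Measurable (X i)) {ν : Measure β} (hν : ∀ i, μ.map (X i) = ν)
    {B : Set β} (hB : MeasurableSet B) :
    μ.real {ω | ∀ i, X i ω ∈ B} = ν.real B ^ Fintype.card ι := by
  have hset : {ω | ∀ i, X i ω ∈ B} = ⋂ i, X i ⁻¹' B := by ext; simp
  rw [hset, measureReal_def, h.meas_iInter fun i ↦ ⟨B, hB, rfl⟩, ENNReal.toReal_prod]
  simp_rw [← measureReal_def, ← map_measureReal_apply (hX _) hB, hν]
  simp

lemma IndepFun.measureReal_union_preimage [IsProbabilityMeasure μ] {f : Ω → β} {g : Ω → β'}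
    (h : IndepFun f g μ) (hf : Measurable f) (hg : Measurable g) {A : Set β} {B : Set β'}
    (hA : MeasurableSet A) (hB : MeasurableSet B) :
    μ.real (f ⁻¹' A ∪ g ⁻¹' B) = 1 - (1 - μ.real (f ⁻¹' A)) * (1 - μ.real (g ⁻¹' B)) := by
  have hinter : μ.real (f ⁻¹' Aᶜ ∩ g ⁻¹' Bᶜ) = μ.real (f ⁻¹' Aᶜ) * μ.real (g ⁻¹' Bᶜ) := by
    simp only [measureReal_def, h.measure_inter_preimage_eq_mul _ _ hA.compl hB.compl,
      ENNReal.toReal_mul]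
  rw [preimage_compl, preimage_compl, ← compl_union,
    probReal_compl_eq_one_sub ((hA.preimage hf).union (hB.preimage hg)),
    probReal_compl_eq_one_sub (hA.preimage hf),
    probReal_compl_eq_one_sub (hB.preimage hg)] at hinter
  linarith

end ProbabilityTheory

lemma measurable_expLaw_density (θ : ℝ) :
    Measurable fun t : ℝ ↦ ENNReal.ofReal (if 0 ≤ t then (1 / θ) * exp (-t / θ) else 0) :=
  (Measurable.ite measurableSet_Ici (by fun_prop) measurable_const).ennreal_ofReal

lemma expLaw_eq_expMeasure (θ : ℝ) : expLaw θ = expMeasure θ⁻¹ := by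
  change _ = volume.withDensity (exponentialPDF θ⁻¹)
  unfold expLaw
  congr with t
  rw [exponentialPDF_eq]
  congr 2
  ring_nf

lemma isProbabilityMeasure_expLaw {θ : ℝ} (hθ : 0 < θ) : IsProbabilityMeasure (expLaw θ) := by
  rw [expLaw_eq_expMeasure]
  exact isProbabilityMeasure_expMeasure (inv_pos.2 hθ)

lemma cdf_expLaw {θ : ℝ} (hθ : 0 < θ) (x : ℝ) :
    cdf (expLaw θ) x = if 0 ≤ x then 1 - exp (-x / θ) else 0 := by
  rw [expLaw_eq_expMeasure, cdf_expMeasure_eq (inv_pos.2 hθ)]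
  ring_nf

lemma expLaw_real_Iic {θ x : ℝ} (hθ : 0 < θ) (hx : 0 ≤ x) :
    (expLaw θ).real (Iic x) = 1 - exp (-x / θ) := by
  have := isProbabilityMeasure_expLaw hθ
  rw [← cdf_eq_real, cdf_expLaw hθ, if_pos hx]

lemma ae_nonneg_expLaw (θ : ℝ) : ∀ᵐ x ∂expLaw θ, 0 ≤ x := by
  rw [expLaw, ae_withDensity_iff (measurable_expLaw_density θ)]
  refine Eventually.of_forall fun x hx ↦ ?_
  by_contra h
  simp [h] at hx

lemma IsExpMean.ae_nonneg {Ω : Type*} [MeasurableSpace Ω] {μ : Measure Ω} {X : Ω → ℝ} {θ : ℝ}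
    (hX : IsExpMean μ X θ) : ∀ᵐ ω ∂μ, 0 ≤ X ω :=
  ae_of_ae_map hX.1.aemeasurable (hX.2 ▸ ae_nonneg_expLaw θ)

/-- CDF at `s ≥ 0` of the sum of independent exponentials with distinct means `γ` and `ζ`. -/
noncomputable def hypoexpCDF (γ ζ s : ℝ) : ℝ :=
  1 - (γ * exp (-s / γ) - ζ * exp (-s / ζ)) / (γ - ζ)

lemma integral_hypoexp_density {γ ζ : ℝ} (hγ : γ ≠ 0) (hζ : ζ ≠ 0) (hne : γ ≠ ζ) (s : ℝ) :
    ∫ x in 0..s, (1 / γ) * exp (-x / γ) * (1 - exp (-(s - x) / ζ)) = hypoexpCDF γ ζ s := by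
  have hζγ : ζ - γ ≠ 0 := sub_ne_zero.2 hne.symm
  have hderiv : ∀ x, HasDerivAt
      (fun x ↦ -exp (-x / γ) + ζ / (ζ - γ) * (exp (-x / γ) * exp (-(s - x) / ζ)))
      ((1 / γ) * exp (-x / γ) * (1 - exp (-(s - x) / ζ))) x := by
    intro x
    have h1 : HasDerivAt (fun x ↦ exp (-x / γ)) (exp (-x / γ) * (-1 / γ)) x :=
      ((hasDerivAt_neg x).div_const γ).exp
    have h2 : HasDerivAt (fun x ↦ exp (-(s - x) / ζ)) (exp (-(s - x) / ζ) * (- -1 / ζ)) x :=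
      (((hasDerivAt_id' x).const_sub s).neg.div_const ζ).exp
    refine (h1.neg.add ((h1.mul h2).const_mul _)).congr_deriv ?_
    field_simp
    ring
  rw [intervalIntegral.integral_eq_sub_of_hasDerivAt (fun x _ ↦ hderiv x)
    (by apply Continuous.intervalIntegrable; fun_prop)]
  simp only [hypoexpCDF, neg_zero, zero_div, exp_zero, sub_self, sub_zero]
  field_simp
  ring

lemma lintegral_cdf_expLaw_sub {γ ζ : ℝ} (hζ : 0 < ζ) (s : ℝ) :
    ∫⁻ x, ENNReal.ofReal (cdf (expLaw ζ) (s - x)) ∂expLaw γ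
      = ∫⁻ x in Icc 0 s, ENNReal.ofReal ((1 / γ) * exp (-x / γ) * (1 - exp (-(s - x) / ζ))) := by
  have hF : Measurable fun x ↦ ENNReal.ofReal (cdf (expLaw ζ) (s - x)) :=
    ((cdf (expLaw ζ)).mono.measurable.comp (measurable_const.sub measurable_id)).ennreal_ofReal
  rw [expLaw, lintegral_withDensity_eq_lintegral_mul _ (measurable_expLaw_density γ) hF,
    ← lintegral_indicator measurableSet_Icc]
  refine lintegral_congr fun x ↦ ?_
  rw [Pi.mul_apply, cdf_expLaw hζ]
  by_cases hx : 0 ≤ x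
  · by_cases hxs : x ≤ s
    · rw [if_pos hx, if_pos (sub_nonneg.2 hxs),
        indicator_of_mem (show x ∈ Icc 0 s from ⟨hx, hxs⟩), ← ENNReal.ofReal_mul' (sub_nonneg.2
          (exp_le_one_iff.2 (div_nonpos_of_nonpos_of_nonneg (by linarith) hζ.le)))]
    · rw [if_neg (show ¬0 ≤ s - x by linarith), ENNReal.ofReal_zero, mul_zero,
        indicator_of_notMem fun h ↦ hxs h.2]
  · rw [if_neg hx, ENNReal.ofReal_zero, zero_mul, indicator_of_notMem fun h ↦ hx h.1]

lemma expLaw_prod_expLaw_real_setOf_add_le {γ ζ s : ℝ} (hγ : 0 < γ) (hζ : 0 < ζ) (hne : γ ≠ ζ)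
    (hs : 0 ≤ s) :
    ((expLaw γ).prod (expLaw ζ)).real {p | p.1 + p.2 ≤ s} = hypoexpCDF γ ζ s := by
  have := isProbabilityMeasure_expLaw hζ
  set ψ : ℝ → ℝ := fun x ↦ (1 / γ) * exp (-x / γ) * (1 - exp (-(s - x) / ζ))
  have hψ_nonneg : ∀ x ∈ Icc 0 s, 0 ≤ ψ x := by
    rintro x ⟨-, hxs⟩
    have : exp (-(s - x) / ζ) ≤ 1 :=
      exp_le_one_iff.2 (div_nonpos_of_nonpos_of_nonneg (by linarith) hζ.le)
    exact mul_nonneg (by positivity) (by linarith)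
  have hslice : ∀ x, expLaw ζ (Prod.mk x ⁻¹' {p : ℝ × ℝ | p.1 + p.2 ≤ s})
      = ENNReal.ofReal (cdf (expLaw ζ) (s - x)) := by
    intro x
    rw [ofReal_cdf]
    congr 1
    ext y
    simp [le_sub_iff_add_le']
  have hlint : ((expLaw γ).prod (expLaw ζ)) {p | p.1 + p.2 ≤ s}
      = ENNReal.ofReal (∫ x in 0..s, ψ x) := by
    rw [Measure.prod_apply (measurableSet_le (by fun_prop) measurable_const)]
    simp_rw [hslice]
    rw [lintegral_cdf_expLaw_sub hζ, ← ofReal_integral_eq_lintegral_ofReal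
      (by fun_prop : Continuous ψ).integrableOn_Icc
      (ae_restrict_of_forall_mem measurableSet_Icc hψ_nonneg),
      intervalIntegral.integral_of_le hs, integral_Icc_eq_integral_Ioc]
  rw [measureReal_def, hlint,
    ENNReal.toReal_ofReal (intervalIntegral.integral_nonneg hs hψ_nonneg),
    integral_hypoexp_density hγ.ne' hζ.ne' hne]

lemma logb_one_add_iSup_le_iff {ι : Type*} [Finite ι] {g : ι → ℝ} (hg : ∀ i, 0 ≤ g i) {R : ℝ}
    (hR : 0 ≤ R) : logb 2 (1 + ⨆ i, g i) ≤ R ↔ ∀ i, g i ≤ 2 ^ R - 1 := by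
  have h2R : 0 ≤ (2 : ℝ) ^ R - 1 := sub_nonneg.2 (one_le_rpow one_le_two hR)
  rw [logb_le_iff_le_rpow one_lt_two (by linarith [Real.iSup_nonneg hg]), ← le_sub_iff_add_le']
  exact ⟨fun h i ↦ (le_ciSup (Set.finite_range g).bddAbove i).trans h,
    fun h ↦ Real.iSup_le h h2R⟩

section Link

variable {Ω ι : Type*} [MeasurableSpace Ω] {μ : Measure Ω}

lemma measureReal_forall_le_union_forall_add_le [Fintype ι] {θ γ ζ r s : ℝ} (hθ : 0 < θ)
    (hγ : 0 < γ) (hζ : 0 < ζ) (hne : γ ≠ ζ) (hr : 0 ≤ r) (hs : 0 ≤ s) {E E' Z : ι → Ω → ℝ}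
    (hE : ∀ n, IsExpMean μ (E n) θ) (hE' : ∀ n, IsExpMean μ (E' n) γ)
    (hZ : ∀ n, IsExpMean μ (Z n) ζ) (hindep : iIndepFun (Sum.elim E (Sum.elim E' Z)) μ) :
    μ.real ({ω | ∀ n, E n ω ≤ r} ∪ {ω | ∀ n, E' n ω + Z n ω ≤ s}) =
      1 - (1 - (1 - exp (-r / θ)) ^ Fintype.card ι) * (1 - hypoexpCDF γ ζ s ^ Fintype.card ι) := by
  have := hindep.isProbabilityMeasure
  have hEm n := (hE n).1
  have hE'Zm : ∀ j, Measurable (Sum.elim E' Z j) :=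
    Sum.forall.2 ⟨fun n ↦ (hE' n).1, fun n ↦ (hZ n).1⟩
  have hS : μ.real {ω | ∀ n, E n ω ≤ r} = (1 - exp (-r / θ)) ^ Fintype.card ι := by
    rw [← expLaw_real_Iic hθ hr]
    exact hindep.sumElim_left.measureReal_setOf_forall_mem hEm
      (fun n ↦ (hE n).2) measurableSet_Iic
  have hP : μ.real {ω | ∀ n, E' n ω + Z n ω ≤ s} = hypoexpCDF γ ζ s ^ Fintype.card ι := by
    have hlaw : ∀ n, μ.map (fun ω ↦ (E' n ω, Z n ω)) = (expLaw γ).prod (expLaw ζ) := by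
      intro n
      have hi : IndepFun (E' n) (Z n) μ :=
        hindep.indepFun (i := .inr (.inl n)) (j := .inr (.inr n)) (by simp)
      rw [(indepFun_iff_map_prod_eq_prod_map_map (hE' n).1.aemeasurable
        (hZ n).1.aemeasurable).1 hi, (hE' n).2, (hZ n).2]
    rw [← expLaw_prod_expLaw_real_setOf_add_le hγ hζ hne hs]
    exact (hindep.sumElim_right.prodMk_of_sumElim (fun n ↦ (hE' n).1)
      (fun n ↦ (hZ n).1)).measureReal_setOf_forall_mem (fun n ↦ (hE' n).1.prodMk (hZ n).1) hlaw
      (measurableSet_le (f := fun p : ℝ × ℝ ↦ p.1 + p.2) (by fun_prop) measurable_const)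
  rw [← hS, ← hP]
  exact (hindep.indepFun_sumElim hEm hE'Zm).measureReal_union_preimage
    (measurable_pi_lambda _ hEm) (measurable_pi_lambda _ hE'Zm)
    (A := {x | ∀ n, x n ≤ r}) (B := {x | ∀ n, x (.inl n) + x (.inr n) ≤ s})
    (by measurability) (by measurability)

/-- Outage event of one link with rate `R` under sum rate `R'`, as a set of gain vectors indexed
as in `Sum.elim E (Sum.elim E' Z)`. -/
def linkOutageSet (ι : Type*) (R R' : ℝ) : Set (ι ⊕ (ι ⊕ ι) → ℝ) :=
  {x | logb 2 (1 + ⨆ n, x (.inl n)) ≤ R ∨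
    logb 2 (1 + ⨆ n, (x (.inr (.inl n)) + x (.inr (.inr n)))) ≤ R'}

lemma measurableSet_linkOutageSet [Countable ι] (R R' : ℝ) :
    MeasurableSet (linkOutageSet ι R R') := by
  have h1 : Measurable fun x : ι ⊕ (ι ⊕ ι) → ℝ ↦ logb 2 (1 + ⨆ n, x (.inl n)) :=
    (((Measurable.iSup fun n ↦ by fun_prop).const_add 1).log).div_const _
  have h2 : Measurable fun x : ι ⊕ (ι ⊕ ι) → ℝ ↦
      logb 2 (1 + ⨆ n, (x (.inr (.inl n)) + x (.inr (.inr n)))) :=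
    (((Measurable.iSup fun n ↦ by fun_prop).const_add 1).log).div_const _
  exact (measurableSet_le h1 measurable_const).union (measurableSet_le h2 measurable_const)

lemma measureReal_preimage_linkOutageSet [Fintype ι] {θ γ ζ R R' : ℝ} (hθ : 0 < θ)
    (hγ : 0 < γ) (hζ : 0 < ζ) (hne : γ ≠ ζ) (hR : 0 ≤ R) (hR' : 0 ≤ R') {E E' Z : ι → Ω → ℝ}
    (hE : ∀ n, IsExpMean μ (E n) θ) (hE' : ∀ n, IsExpMean μ (E' n) γ)
    (hZ : ∀ n, IsExpMean μ (Z n) ζ) (hindep : iIndepFun (Sum.elim E (Sum.elim E' Z)) μ) :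
    μ.real ((fun ω k ↦ Sum.elim E (Sum.elim E' Z) k ω) ⁻¹' linkOutageSet ι R R') =
      1 - (1 - (1 - exp (-(2 ^ R - 1) / θ)) ^ Fintype.card ι)
        * (1 - hypoexpCDF γ ζ (2 ^ R' - 1) ^ Fintype.card ι) := by
  have hnonneg : ∀ᵐ ω ∂μ, ∀ k, 0 ≤ Sum.elim E (Sum.elim E' Z) k ω :=
    ae_all_iff.2 <| Sum.forall.2 ⟨fun n ↦ (hE n).ae_nonneg,
      Sum.forall.2 ⟨fun n ↦ (hE' n).ae_nonneg, fun n ↦ (hZ n).ae_nonneg⟩⟩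
  rw [← measureReal_forall_le_union_forall_add_le hθ hγ hζ hne
    (sub_nonneg.2 (one_le_rpow one_le_two hR)) (sub_nonneg.2 (one_le_rpow one_le_two hR'))
    hE hE' hZ hindep]
  refine measureReal_congr ?_
  rw [eventuallyEq_set]
  filter_upwards [hnonneg] with ω hω
  simp only [linkOutageSet, mem_preimage, mem_ofPred_eq, mem_union, Sum.elim_inl, Sum.elim_inr,
    logb_one_add_iSup_le_iff (g := (E · ω)) (fun n ↦ hω (.inl n)) hR,
    logb_one_add_iSup_le_iff (g := fun n ↦ E' n ω + Z n ω)
      (fun n ↦ add_nonneg (hω (.inr (.inl n))) (hω (.inr (.inr n)))) hR']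

end Link

theorem outage_probability_fama_ic_general
    {Ω : Type*} [MeasurableSpace Ω] (μ : Measure Ω) [IsProbabilityMeasure μ]
    (N1 N2 : ℕ)
    (γm1 γm2 ζm1 ζm2 : ℝ) (hγm1 : 0 < γm1) (hγm2 : 0 < γm2) (hζm1 : 0 < ζm1) (hζm2 : 0 < ζm2)
    (hne1 : γm1 ≠ ζm1) (hne2 : γm2 ≠ ζm2)
    (E1 E1' Z1 : Fin N1 → Ω → ℝ) (E2 E2' Z2 : Fin N2 → Ω → ℝ)
    (hE1 : ∀ n, IsExpMean μ (E1 n) γm1) (hE1' : ∀ n, IsExpMean μ (E1' n) γm1)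
    (hZ1 : ∀ n, IsExpMean μ (Z1 n) ζm1)
    (hE2 : ∀ n, IsExpMean μ (E2 n) γm2) (hE2' : ∀ n, IsExpMean μ (E2' n) γm2)
    (hZ2 : ∀ n, IsExpMean μ (Z2 n) ζm2)
    (hindep : iIndepFun
      (Sum.elim (Sum.elim E1 (Sum.elim E1' Z1)) (Sum.elim E2 (Sum.elim E2' Z2))) μ)
    (R1 R2 : ℝ) (hR1 : 0 ≤ R1) (hR2 : 0 ≤ R2) :
    (μ ({ω | Real.logb 2 (1 + ⨆ n, E1 n ω) ≤ R1} ∪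
        {ω | Real.logb 2 (1 + ⨆ n, E2 n ω) ≤ R2} ∪
        {ω | min (Real.logb 2 (1 + ⨆ n, (E1' n ω + Z1 n ω)))
               (Real.logb 2 (1 + ⨆ n, (E2' n ω + Z2 n ω))) ≤ R1 + R2})).toReal =
      1 - (1 - (1 - Real.exp (-((2 : ℝ) ^ R1 - 1) / γm1)) ^ N1)
          * (1 - (1 - Real.exp (-((2 : ℝ) ^ R2 - 1) / γm2)) ^ N2)
          * ((1 - (1 - (γm1 * Real.exp (-((2 : ℝ) ^ (R1 + R2) - 1) / γm1)
                        - ζm1 * Real.exp (-((2 : ℝ) ^ (R1 + R2) - 1) / ζm1)) / (γm1 - ζm1)) ^ N1)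
            * (1 - (1 - (γm2 * Real.exp (-((2 : ℝ) ^ (R1 + R2) - 1) / γm2)
                        - ζm2 * Real.exp (-((2 : ℝ) ^ (R1 + R2) - 1) / ζm2)) / (γm2 - ζm2)) ^ N2)) := by
  have hm1 : ∀ k, Measurable (Sum.elim E1 (Sum.elim E1' Z1) k) :=
    Sum.forall.2 ⟨fun n ↦ (hE1 n).1, Sum.forall.2 ⟨fun n ↦ (hE1' n).1, fun n ↦ (hZ1 n).1⟩⟩
  have hm2 : ∀ k, Measurable (Sum.elim E2 (Sum.elim E2' Z2) k) :=
    Sum.forall.2 ⟨fun n ↦ (hE2 n).1, Sum.forall.2 ⟨fun n ↦ (hE2' n).1, fun n ↦ (hZ2 n).1⟩⟩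
  have hRs : 0 ≤ R1 + R2 := add_nonneg hR1 hR2
  have hlinks := (hindep.indepFun_sumElim hm1 hm2).measureReal_union_preimage
    (measurable_pi_lambda _ hm1) (measurable_pi_lambda _ hm2)
    (measurableSet_linkOutageSet R1 (R1 + R2)) (measurableSet_linkOutageSet R2 (R1 + R2))
  rw [measureReal_preimage_linkOutageSet hγm1 hγm1 hζm1 hne1 hR1 hRs hE1 hE1' hZ1
      hindep.sumElim_left,
    measureReal_preimage_linkOutageSet hγm2 hγm2 hζm2 hne2 hR2 hRs hE2 hE2' hZ2
      hindep.sumElim_right] at hlinks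
  refine (congrArg μ.real ?_).trans (hlinks.trans ?_)
  · ext ω
    simp only [linkOutageSet, mem_union, mem_ofPred_eq, mem_preimage, min_le_iff, Sum.elim_inl,
      Sum.elim_inr]
    tauto
  · simp only [Fintype.card_fin, hypoexpCDF]
    ring

/-- **Outage probability of the FAMA interference channel (Theorem 1), independent ports.**
For `i = 1, 2`, `γi = max_{1 ≤ n ≤ Ni} E_{i,n}` and `κi = max_{1 ≤ n ≤ Ni} (E'_{i,n} + Z_{i,n})`,
where all the `E_{i,n}, E'_{i,n}, Z_{i,n}` are mutually independent, `E_{i,n}, E'_{i,n}` are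
exponential with mean `γmi` and `Z_{i,n}` is exponential with mean `ζmi`.  Then the outage
probability equals
`1 − ∏_{i} [1 − (1 − e^{−R̃i/γmi})^{Ni}] · ∏_{i} [1 − (1 − (γmi e^{−R̃sum/γmi} − ζmi e^{−R̃sum/ζmi})/(γmi − ζmi))^{Ni}]`. -/
theorem outage_probability_fama_ic
    {Ω : Type*} [MeasurableSpace Ω] (μ : Measure Ω) [IsProbabilityMeasure μ]
    (N1 N2 : ℕ) (hN1 : 0 < N1) (hN2 : 0 < N2)
    (γm1 γm2 ζm1 ζm2 : ℝ) (hγm1 : 0 < γm1) (hγm2 : 0 < γm2) (hζm1 : 0 < ζm1) (hζm2 : 0 < ζm2)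
    (hne1 : γm1 ≠ ζm1) (hne2 : γm2 ≠ ζm2)
    (E1 E1' Z1 : Fin N1 → Ω → ℝ) (E2 E2' Z2 : Fin N2 → Ω → ℝ)
    (hE1 : ∀ n, IsExpMean μ (E1 n) γm1) (hE1' : ∀ n, IsExpMean μ (E1' n) γm1)
    (hZ1 : ∀ n, IsExpMean μ (Z1 n) ζm1)
    (hE2 : ∀ n, IsExpMean μ (E2 n) γm2) (hE2' : ∀ n, IsExpMean μ (E2' n) γm2)
    (hZ2 : ∀ n, IsExpMean μ (Z2 n) ζm2)
    (hindep : iIndepFun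
      (Sum.elim (Sum.elim E1 (Sum.elim E1' Z1)) (Sum.elim E2 (Sum.elim E2' Z2))) μ)
    (R1 R2 : ℝ) (hR1 : 0 ≤ R1) (hR2 : 0 ≤ R2) :
    (μ ({ω | Real.logb 2 (1 + ⨆ n, E1 n ω) ≤ R1} ∪
        {ω | Real.logb 2 (1 + ⨆ n, E2 n ω) ≤ R2} ∪
        {ω | min (Real.logb 2 (1 + ⨆ n, (E1' n ω + Z1 n ω)))
               (Real.logb 2 (1 + ⨆ n, (E2' n ω + Z2 n ω))) ≤ R1 + R2})).toReal =
      1 - (1 - (1 - Real.exp (-((2 : ℝ) ^ R1 - 1) / γm1)) ^ N1)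
          * (1 - (1 - Real.exp (-((2 : ℝ) ^ R2 - 1) / γm2)) ^ N2)
          * ((1 - (1 - (γm1 * Real.exp (-((2 : ℝ) ^ (R1 + R2) - 1) / γm1)
                        - ζm1 * Real.exp (-((2 : ℝ) ^ (R1 + R2) - 1) / ζm1)) / (γm1 - ζm1)) ^ N1)
            * (1 - (1 - (γm2 * Real.exp (-((2 : ℝ) ^ (R1 + R2) - 1) / γm2)
                        - ζm2 * Real.exp (-((2 : ℝ) ^ (R1 + R2) - 1) / ζm2)) / (γm2 - ζm2)) ^ N2)) :=
  outage_probability_fama_ic_general μ N1 N2 γm1 γm2 ζm1 ζm2 hγm1 hγm2 hζm1 hζm2 hne1 hne2 E1 E1' Z1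
    E2 E2' Z2 hE1 hE1' hZ1 hE2 hE2' hZ2 hindep R1 R2 hR1 hR2
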